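/- Let Δ_n ⊂ ℝ^{d_n} be finite-dimensional probability simplices and, for each β ∈ ℝ and j ≥ 1, let S(β)^{(j)} : Δ_j → Δ_{j-1} be induced by a left stochastic matrix, and let S^{(j)} be left stochastic matrices with Σ_{j=1}^∞ ‖S(β)^{(j)} − S^{(j)}‖_1 → 0 as β → ∞ (operator norm for the ℓ¹-norm). Then for every ψ in the inverse limit lim_j (Δ_j, S^{(j)}) there exist φ^β ∈ lim_j (Δ_j, S(β)^{(j)}) for each β such that φ^β → ψ in the product topology as β → ∞. -/

import Mathlib

/-!
Fix `β`. Pulling `ψ_{j+n}` back to level `j` through the left stochastic maps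
`S(β)^{(j)} ⋯ S(β)^{(j+n-1)}` gives points of `Δ_j` which form an `ℓ¹`-Cauchy sequence in `n`:
stochastic matrices are `ℓ¹`-contractions, so consecutive terms differ by at most the defect
`‖S(β)^{(j+n)} ψ_{j+n+1} - ψ_{j+n}‖₁ ≤ ‖S(β)^{(j+n)} - S^{(j+n)}‖₁`. Their limits `φ^β` lie in the
inverse limit along `S(β)`, and telescoping gives `‖φ^β_j - ψ_j‖₁ ≤ Σ_k ‖S(β)^{(k)} - S^{(k)}‖₁`,
which tends to `0` as `β → ∞`.
-/

open scoped BigOperators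

/-- The operator norm induced by the `ℓ¹`-norms: the largest `ℓ¹`-norm of a column. -/
noncomputable def l1opNorm {m n : Type} [Fintype m] [Fintype n] (M : Matrix m n ℝ) : ℝ :=
  ⨆ j : n, ∑ i : m, |M i j|

open Filter Topology Matrix

section L1

variable {m n : Type} [Fintype m] [Fintype n]

def l1Norm (z : n → ℝ) : ℝ :=
  ∑ i, |z i|

def IsLeftStochastic (M : Matrix m n ℝ) : Prop :=
  (∀ v w, 0 ≤ M v w) ∧ ∀ w, ∑ v, M v w = 1

lemma l1Norm_nonneg (z : n → ℝ) : 0 ≤ l1Norm z :=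
  Finset.sum_nonneg fun _ _ => abs_nonneg _

lemma norm_le_l1Norm (z : n → ℝ) : ‖z‖ ≤ l1Norm z :=
  (pi_norm_le_iff_of_nonneg (l1Norm_nonneg z)).2 fun i =>
    Finset.single_le_sum (f := fun i => |z i|) (fun _ _ => abs_nonneg _) (Finset.mem_univ i)

lemma l1Norm_add_le (y z : n → ℝ) : l1Norm (y + z) ≤ l1Norm y + l1Norm z := by
  unfold l1Norm
  rw [← Finset.sum_add_distrib]
  exact Finset.sum_le_sum fun i _ => abs_add_le _ _

lemma l1Norm_sub_le_add (x y z : n → ℝ) : l1Norm (x - z) ≤ l1Norm (x - y) + l1Norm (y - z) := by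
  simpa using l1Norm_add_le (x - y) (y - z)

lemma continuous_l1Norm : Continuous (l1Norm : (n → ℝ) → ℝ) := by
  unfold l1Norm
  fun_prop

lemma l1Norm_eq_one_of_mem_stdSimplex {z : n → ℝ} (hz : z ∈ stdSimplex ℝ n) : l1Norm z = 1 := by
  rw [← hz.2]
  exact Finset.sum_congr rfl fun i _ => abs_of_nonneg (hz.1 i)

lemma l1Norm_mulVec_le (M : Matrix m n ℝ) (z : n → ℝ) :
    l1Norm (M *ᵥ z) ≤ l1opNorm M * l1Norm z := by
  have hcol : ∀ w, ∑ v, |M v w| ≤ l1opNorm M := fun w =>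
    le_ciSup (f := fun w => ∑ v, |M v w|) (Set.finite_range _).bddAbove w
  calc l1Norm (M *ᵥ z) ≤ ∑ v, ∑ w, |M v w| * |z w| :=
        Finset.sum_le_sum fun v _ =>
          (Finset.abs_sum_le_sum_abs _ _).trans_eq (by simp only [abs_mul])
    _ = ∑ w, (∑ v, |M v w|) * |z w| := by
        rw [Finset.sum_comm]
        simp only [Finset.sum_mul]
    _ ≤ ∑ w, l1opNorm M * |z w| :=
        Finset.sum_le_sum fun w _ => mul_le_mul_of_nonneg_right (hcol w) (abs_nonneg _)
    _ = l1opNorm M * l1Norm z := (Finset.mul_sum _ _ _).symm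

lemma IsLeftStochastic.l1opNorm_le_one {M : Matrix m n ℝ} (hM : IsLeftStochastic M) :
    l1opNorm M ≤ 1 :=
  Real.iSup_le (fun w => (Finset.sum_congr rfl fun v _ => abs_of_nonneg (hM.1 v w)).trans_le
    (hM.2 w).le) zero_le_one

lemma IsLeftStochastic.mulVec_mem_stdSimplex {M : Matrix m n ℝ} (hM : IsLeftStochastic M)
    {z : n → ℝ} (hz : z ∈ stdSimplex ℝ n) : M *ᵥ z ∈ stdSimplex ℝ m := by
  refine ⟨fun v => Finset.sum_nonneg fun w _ => mul_nonneg (hM.1 v w) (hz.1 w), ?_⟩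
  calc ∑ v, (M *ᵥ z) v = ∑ w, (∑ v, M v w) * z w := by
        simp only [mulVec, dotProduct, Finset.sum_mul]
        exact Finset.sum_comm
    _ = 1 := by simp only [hM.2, one_mul, hz.2]

end L1

section Pullback

variable {d : ℕ → Type} [∀ n, Fintype (d n)] (S : ∀ j, Matrix (d j) (d (j + 1)) ℝ)

/-- `pullback S ψ n j = S j *ᵥ S (j + 1) *ᵥ ⋯ *ᵥ S (j + n - 1) *ᵥ ψ (j + n)`. -/
noncomputable def pullback (ψ : ∀ j, d j → ℝ) : ℕ → ∀ j, d j → ℝ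
  | 0 => ψ
  | n + 1 => fun j => S j *ᵥ pullback ψ n (j + 1)

lemma pullback_succ (ψ : ∀ j, d j → ℝ) (n : ℕ) :
    pullback S ψ (n + 1) = pullback S (fun k => S k *ᵥ ψ (k + 1)) n := by
  induction n with
  | zero => rfl
  | succ n ih => funext j; exact congrArg (S j *ᵥ ·) (congrFun ih (j + 1))

lemma pullback_mem_stdSimplex (hS : ∀ j, IsLeftStochastic (S j)) {ψ : ∀ j, d j → ℝ}
    (hψ : ∀ j, ψ j ∈ stdSimplex ℝ (d j)) (n : ℕ) (j : ℕ) :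
    pullback S ψ n j ∈ stdSimplex ℝ (d j) := by
  induction n generalizing j with
  | zero => exact hψ j
  | succ n ih => exact (hS j).mulVec_mem_stdSimplex (ih (j + 1))

lemma l1Norm_pullback_sub_le (hS : ∀ j, l1opNorm (S j) ≤ 1) (ψ χ : ∀ j, d j → ℝ) (n j : ℕ) :
    l1Norm (pullback S ψ n j - pullback S χ n j) ≤ l1Norm (ψ (j + n) - χ (j + n)) := by
  induction n generalizing j with
  | zero => rfl
  | succ n ih =>
    calc l1Norm (S j *ᵥ pullback S ψ n (j + 1) - S j *ᵥ pullback S χ n (j + 1))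
        ≤ l1opNorm (S j) * l1Norm (pullback S ψ n (j + 1) - pullback S χ n (j + 1)) := by
          rw [← mulVec_sub]
          exact l1Norm_mulVec_le _ _
      _ ≤ l1Norm (pullback S ψ n (j + 1) - pullback S χ n (j + 1)) :=
          mul_le_of_le_one_left (l1Norm_nonneg _) (hS j)
      _ ≤ l1Norm (ψ (j + 1 + n) - χ (j + 1 + n)) := ih (j + 1)
      _ = l1Norm (ψ (j + (n + 1)) - χ (j + (n + 1))) := by rw [Nat.add_right_comm]; rfl

lemma l1Norm_pullback_succ_sub_le (hS : ∀ j, l1opNorm (S j) ≤ 1) (ψ : ∀ j, d j → ℝ) (n j : ℕ) :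
    l1Norm (pullback S ψ (n + 1) j - pullback S ψ n j) ≤
      l1Norm (S (j + n) *ᵥ ψ (j + n + 1) - ψ (j + n)) := by
  rw [pullback_succ]
  exact l1Norm_pullback_sub_le S hS _ ψ n j

lemma l1Norm_pullback_sub_self_le_sum (hS : ∀ j, l1opNorm (S j) ≤ 1) (ψ : ∀ j, d j → ℝ)
    (n j : ℕ) :
    l1Norm (pullback S ψ n j - ψ j) ≤
      ∑ i ∈ Finset.range n, l1Norm (S (j + i) *ᵥ ψ (j + i + 1) - ψ (j + i)) := by
  induction n with
  | zero => simp [pullback, l1Norm]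
  | succ n ih =>
    rw [Finset.sum_range_succ]
    linarith [l1Norm_sub_le_add (pullback S ψ (n + 1) j) (pullback S ψ n j) (ψ j),
      l1Norm_pullback_succ_sub_le S hS ψ n j]

theorem exists_compatible_l1Norm_sub_le (hS : ∀ j, IsLeftStochastic (S j))
    {ψ : ∀ j, d j → ℝ} (hψ : ∀ j, ψ j ∈ stdSimplex ℝ (d j)) {δ : ℕ → ℝ} (hδ : Summable δ)
    (hdefect : ∀ k, l1Norm (S k *ᵥ ψ (k + 1) - ψ k) ≤ δ k) :
    ∃ φ : ∀ j, d j → ℝ, (∀ j, φ j ∈ stdSimplex ℝ (d j)) ∧ (∀ j, φ j = S j *ᵥ φ (j + 1)) ∧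
      ∀ j, l1Norm (φ j - ψ j) ≤ ∑' k, δ k := by
  have hS1 : ∀ j, l1opNorm (S j) ≤ 1 := fun j => (hS j).l1opNorm_le_one
  have hδ0 : ∀ k, 0 ≤ δ k := fun k => (l1Norm_nonneg _).trans (hdefect k)
  have hcauchy (j : ℕ) : CauchySeq fun n => pullback S ψ n j := by
    refine cauchySeq_of_summable_dist <| (hδ.comp_injective (add_right_injective j)).of_nonneg_of_le
      (fun _ => dist_nonneg) fun n => ?_
    rw [dist_comm, dist_eq_norm]
    exact (norm_le_l1Norm _).trans
      ((l1Norm_pullback_succ_sub_le S hS1 ψ n j).trans (hdefect (j + n)))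
  choose φ hφ using fun j => cauchySeq_tendsto_of_complete (hcauchy j)
  refine ⟨φ, fun j => ?_, fun j => ?_, fun j => ?_⟩
  · exact (isClosed_stdSimplex ℝ _).mem_of_tendsto (hφ j)
      (Eventually.of_forall fun n => pullback_mem_stdSimplex S hS hψ n j)
  · exact tendsto_nhds_unique ((hφ j).comp (tendsto_add_atTop_nat 1))
      (((continuous_const.matrix_mulVec continuous_id).tendsto _).comp (hφ (j + 1)))
  · refine le_of_tendsto ((continuous_l1Norm.tendsto _).comp ((hφ j).sub_const _))
      (Eventually.of_forall fun n => ?_)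
    calc l1Norm (pullback S ψ n j - ψ j)
        ≤ ∑ i ∈ Finset.range n, δ (j + i) :=
          (l1Norm_pullback_sub_self_le_sum S hS1 ψ n j).trans
            (Finset.sum_le_sum fun i _ => hdefect (j + i))
      _ ≤ ∑' i, δ (j + i) :=
          (hδ.comp_injective (add_right_injective j)).sum_le_tsum _ fun i _ => hδ0 (j + i)
      _ ≤ ∑' k, δ k := tsum_comp_le_tsum_of_inj hδ hδ0 (add_right_injective j)

end Pullback

theorem stmt_9 (d : ℕ → Type) [∀ n, Fintype (d n)]
    (S : ℝ → ∀ j : ℕ, Matrix (d j) (d (j + 1)) ℝ)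
    (T : ∀ j : ℕ, Matrix (d j) (d (j + 1)) ℝ)
    (hS : ∀ β j, (∀ v w, 0 ≤ S β j v w) ∧ ∀ w, ∑ v, S β j v w = 1)
    (hsummable : ∀ β, Summable fun j => l1opNorm (S β j - T j))
    (hconv : Filter.Tendsto (fun β => ∑' j, l1opNorm (S β j - T j)) Filter.atTop (nhds 0))
    (ψ : ∀ j, d j → ℝ)
    (hψs : ∀ j, ψ j ∈ stdSimplex ℝ (d j))
    (hψ : ∀ j, ψ j = (T j).mulVec (ψ (j + 1))) :
    ∃ φ : ℝ → ∀ j, d j → ℝ,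
      (∀ β j, φ β j ∈ stdSimplex ℝ (d j)) ∧
      (∀ β j, φ β j = (S β j).mulVec (φ β (j + 1))) ∧
      ∀ j, Filter.Tendsto (fun β => φ β j) Filter.atTop (nhds (ψ j)) := by
  have hdefect (β : ℝ) (k : ℕ) :
      l1Norm (S β k *ᵥ ψ (k + 1) - ψ k) ≤ l1opNorm (S β k - T k) := by
    rw [hψ k, ← sub_mulVec]
    simpa [l1Norm_eq_one_of_mem_stdSimplex (hψs (k + 1))] using
      l1Norm_mulVec_le (S β k - T k) (ψ (k + 1))
  choose φ hφs hφ hφψ using fun β =>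
    exists_compatible_l1Norm_sub_le (S β) (hS β) hψs (hsummable β) (hdefect β)
  refine ⟨φ, hφs, hφ, fun j => tendsto_iff_norm_sub_tendsto_zero.2 ?_⟩
  exact squeeze_zero (fun _ => norm_nonneg _)
    (fun β => (norm_le_l1Norm _).trans (hφψ β j)) hconv
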